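/- Let k ≥ 0, let η be a probability measure on {0,1}^ℤ invariant under 𝕊^{2^k}, and suppose the measure D_k[η] on {0,1}^ℤ × {0,1}^ℕ is ergodic for 𝕊 × 𝕆. Let n > k and let ρ_n = exp(2^{1−n}πi). Then ρ_n is not an eigenvalue of the shift 𝕊 on the space ({0,1}^ℤ, θ₀), where θ₀ = 2^{−k} ∑_{j=0}^{2^k−1} 𝕊^j η is the projection of D_k[η] to {0,1}^ℤ; that is, there is no f ∈ L²(θ₀), f ≠ 0 a.e., with f∘𝕊 = ρ_n f θ₀-almost everywhere. -/

import Mathlib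

open MeasureTheory Classical

/-- The left shift on {0,1}^ℤ. -/
def shiftZ (w : ℤ → Bool) : ℤ → Bool := fun i => w (i + 1)

/-- The odometer (binary addition of one) on {0,1}^ℕ, totalized by fixing sequences
with no zero digit. -/
noncomputable def odo (α : ℕ → Bool) : ℕ → Bool :=
  if h : ∃ n, α n = false then
    fun i => if i < Nat.find h then false else if i = Nat.find h then true else α i
  else α

/-- The dyadic cylinder A_{r,k} = {α : ∑_{i<k} α_i 2^i = r}. -/
def cylA (r k : ℕ) : Set (ℕ → Bool) :=
  {α | (∑ i ∈ Finset.range k, if α i then 2 ^ i else 0) = r}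

/-!
If `f ∘ 𝕊 = ρ f` with `ρ = exp (2πi / 2ⁿ)`, pair `f` with the odometer eigenfunction
`c α = ρ ^ (α₀ + 2 α₁ + ⋯ + 2ⁿ⁻¹ αₙ₋₁)`, which satisfies `c ∘ 𝕆 = ρ c` off the null set of
sequences without a zero digit. Then `f (w) / c (α)` is `𝕊 × 𝕆`-invariant, hence a.e. constant
for the ergodic measure `D_k[η]`. On the component `𝕊ⁱη × χ_{A_{i,k}} m`, Fubini turns this into:
for `𝕊ⁱη`-a.e. `w` with `f w ≠ 0`, `c` is a.e. constant on `A_{i,k}`. But every level set of `c`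
is a rank-`n` cylinder, of measure `2⁻ⁿ < 2⁻ᵏ = m (A_{i,k})`. So `f` vanishes a.e. for every
`𝕊ⁱη`, hence for `θ₀`.
-/

-- `cylA r k` is by definition `{α | bitValue α k = r}`.
def bitValue (α : ℕ → Bool) (n : ℕ) : ℕ := ∑ i ∈ Finset.range n, if α i then 2 ^ i else 0

lemma bitValue_succ (α : ℕ → Bool) (n : ℕ) :
    bitValue α (n + 1) = bitValue α n + if α n then 2 ^ n else 0 :=
  Finset.sum_range_succ _ _

lemma bitValue_lt (α : ℕ → Bool) (n : ℕ) : bitValue α n < 2 ^ n := by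
  induction n with
  | zero => simp [bitValue]
  | succ n ih => rw [bitValue_succ, pow_succ]; split <;> omega

lemma testBit_bitValue (α : ℕ → Bool) {j n : ℕ} (hj : j < n) :
    (bitValue α n).testBit j = α j := by
  induction n with
  | zero => omega
  | succ n ih =>
    rw [bitValue_succ]
    rcases Nat.lt_succ_iff_lt_or_eq.1 hj with hj | rfl
    · split
      · rw [add_comm, Nat.testBit_two_pow_add_gt hj, ih hj]
      · rw [add_zero, ih hj]
    · split <;> rename_i h
      · rw [add_comm, Nat.testBit_two_pow_add_eq, Nat.testBit_lt_two_pow (bitValue_lt α j), h]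
        rfl
      · rw [add_zero, Nat.testBit_lt_two_pow (bitValue_lt α j)]
        simpa using h

lemma cylA_eq_setOf_testBit {v n : ℕ} (hv : v < 2 ^ n) :
    cylA v n = {α | ∀ j ∈ Finset.range n, α j = v.testBit j} := by
  ext α
  refine ⟨fun (hα : bitValue α n = v) j hj => ?_, fun hα => ?_⟩
  · rw [← hα, testBit_bitValue α (Finset.mem_range.1 hj)]
  · show bitValue α n = v
    refine Nat.eq_of_testBit_eq fun j => ?_
    rcases lt_or_ge j n with hj | hj
    · rw [testBit_bitValue α hj, hα j (Finset.mem_range.2 hj)]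
    · rw [Nat.testBit_lt_two_pow ((bitValue_lt α n).trans_le (Nat.pow_le_pow_right two_pos hj)),
        Nat.testBit_lt_two_pow (hv.trans_le (Nat.pow_le_pow_right two_pos hj))]

lemma odo_apply {α : ℕ → Bool} (h : ∃ i, α i = false) (i : ℕ) :
    odo α i = if i < Nat.find h then false else if i = Nat.find h then true else α i := by
  rw [odo, dif_pos h]

-- The `2 ^ n` term is the carry out of the first `n` digits (all `1` iff `n ≤ Nat.find h`).
lemma bitValue_odo_add {α : ℕ → Bool} (h : ∃ i, α i = false) (n : ℕ) :
    bitValue (odo α) n + (if n ≤ Nat.find h then 2 ^ n else 0) = bitValue α n + 1 := by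
  induction n with
  | zero => simp [bitValue]
  | succ n ih =>
    rw [bitValue_succ, bitValue_succ, odo_apply h]
    rcases lt_trichotomy n (Nat.find h) with hn | rfl | hn
    · have hα : α n = true := by simpa using Nat.find_min h hn
      simp only [hn, hα, hn.le, Nat.succ_le_of_lt hn, if_true, Bool.false_eq_true,
        if_false] at ih ⊢
      rw [pow_succ]; omega
    · simp only [lt_irrefl, le_refl, Nat.find_spec h, Bool.false_eq_true,
        show ¬ Nat.find h + 1 ≤ Nat.find h by omega, if_true, if_false] at ih ⊢
      omega
    · simp only [show ¬ n < Nat.find h by omega, show n ≠ Nat.find h by omega,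
        show ¬ n ≤ Nat.find h by omega, show ¬ n + 1 ≤ Nat.find h by omega, if_false] at ih ⊢
      omega

lemma pow_bitValue_odo {M : Type*} [Monoid M] {ζ : M} {n : ℕ} (hζ : ζ ^ 2 ^ n = 1)
    {α : ℕ → Bool} (h : ∃ i, α i = false) :
    ζ ^ bitValue (odo α) n = ζ * ζ ^ bitValue α n := by
  have hcarry := bitValue_odo_add h n
  rw [← pow_succ', ← hcarry]
  split
  · rw [pow_add, hζ, mul_one]
  · rw [add_zero]

lemma measurable_bitValue (n : ℕ) : Measurable fun α : ℕ → Bool => bitValue α n :=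
  Finset.measurable_sum _ fun i _ =>
    (Measurable.of_discrete (f := fun b : Bool => if b then 2 ^ i else 0)).comp
      (measurable_pi_apply i)

def IsFairCoinMeasure (m : Measure (ℕ → Bool)) : Prop :=
  ∀ (s : Finset ℕ) (f : ℕ → Bool), m {α | ∀ i ∈ s, α i = f i} = (1 / 2 : ENNReal) ^ s.card

section FairCoin

variable {m : Measure (ℕ → Bool)}

lemma IsFairCoinMeasure.ae_exists_eq_false (hm : IsFairCoinMeasure m) :
    ∀ᵐ α ∂m, ∃ i, α i = false := by
  have hle : ∀ N : ℕ, m {α | ∀ i, α i = true} ≤ (1 / 2 : ENNReal) ^ N := fun N =>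
    calc m {α | ∀ i, α i = true}
        ≤ m {α | ∀ i ∈ Finset.range N, α i = true} := measure_mono fun α hα i _ => hα i
      _ = (1 / 2 : ENNReal) ^ N := by rw [hm, Finset.card_range]
  have hnull : m {α | ∀ i, α i = true} = 0 :=
    nonpos_iff_eq_zero.1 <|
      ge_of_tendsto' (ENNReal.tendsto_pow_atTop_nhds_zero_of_lt_one (by norm_num)) hle
  simpa [ae_iff] using hnull

lemma IsFairCoinMeasure.measure_cylA (hm : IsFairCoinMeasure m) {v n : ℕ} (hv : v < 2 ^ n) :
    m (cylA v n) = (1 / 2 : ENNReal) ^ n := by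
  rw [cylA_eq_setOf_testBit hv, hm, Finset.card_range]

lemma IsFairCoinMeasure.measure_setOf_pow_bitValue_eq_le (hm : IsFairCoinMeasure m)
    {M : Type*} [CommMonoid M] {ζ : M} {n : ℕ} (hζ : IsPrimitiveRoot ζ (2 ^ n)) (z : M) :
    m {α | ζ ^ bitValue α n = z} ≤ (1 / 2 : ENNReal) ^ n := by
  rcases Set.eq_empty_or_nonempty {α | ζ ^ bitValue α n = z} with hempty | ⟨α₀, hα₀⟩
  · simp [hempty]
  · rw [← hm.measure_cylA (bitValue_lt α₀ n)]
    refine measure_mono fun α (hα : ζ ^ bitValue α n = z) => ?_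
    exact hζ.pow_inj (bitValue_lt α n) (bitValue_lt α₀ n) (hα.trans hα₀.symm)

lemma IsFairCoinMeasure.not_ae_restrict_cylA_pow_bitValue_eq (hm : IsFairCoinMeasure m)
    {M : Type*} [CommMonoid M] {ζ : M} {k n i : ℕ} (hζ : IsPrimitiveRoot ζ (2 ^ n)) (hkn : k < n)
    (hi : i < 2 ^ k) (z : M) :
    ¬ ∀ᵐ α ∂m.restrict (cylA i k), ζ ^ bitValue α n = z := by
  intro h
  have : (1 / 2 : ENNReal) ^ n < (1 / 2) ^ k := by
    rw [one_div, ← ENNReal.inv_pow, ← ENNReal.inv_pow, ENNReal.inv_lt_inv]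
    exact_mod_cast Nat.pow_lt_pow_right one_lt_two hkn
  refine this.not_ge ?_
  calc (1 / 2 : ENNReal) ^ k = m.restrict (cylA i k) Set.univ := by
        rw [Measure.restrict_apply_univ, hm.measure_cylA hi]
    _ ≤ m.restrict (cylA i k) {α | ζ ^ bitValue α n = z} :=
        measure_mono_ae (h.mono fun _ hα _ => hα)
    _ ≤ m {α | ζ ^ bitValue α n = z} := Measure.restrict_apply_le _ _
    _ ≤ (1 / 2) ^ n := hm.measure_setOf_pow_bitValue_eq_le hζ z

end FairCoin

section EigenfunctionQuotient

variable {X Y 𝕜 : Type*} [MeasurableSpace X] [MeasurableSpace Y] [Field 𝕜] {f : X → 𝕜} {c : Y → 𝕜}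

lemma Ergodic.exists_ae_div_eq_const [TopologicalSpace 𝕜] [TopologicalSpace.MetrizableSpace 𝕜]
    {T : X → X} {S : Y → Y} {μ : Measure (X × Y)} (h : Ergodic (fun p => (T p.1, S p.2)) μ)
    {ρ : 𝕜} (hρ : ρ ≠ 0) (hm : AEStronglyMeasurable (fun p => f p.1 / c p.2) μ)
    (hf : ∀ᵐ p ∂μ, f (T p.1) = ρ * f p.1) (hc : ∀ᵐ p ∂μ, c (S p.2) = ρ * c p.2) :
    ∃ C, ∀ᵐ p ∂μ, f p.1 / c p.2 = C := by
  refine h.ae_eq_const_of_ae_eq_comp_ae hm ?_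
  filter_upwards [hf, hc] with p hfp hcp
  simp only [Function.comp_apply, hfp, hcp, mul_div_mul_left _ _ hρ]

lemma ae_eq_zero_of_ae_div_eq_const {μ : Measure X} {ν : Measure Y} [SFinite ν]
    (hc : ∀ z, ¬ ∀ᵐ y ∂ν, c y = z) {C : 𝕜} (h : ∀ᵐ p ∂μ.prod ν, f p.1 / c p.2 = C) :
    ∀ᵐ x ∂μ, f x = 0 := by
  filter_upwards [Measure.ae_ae_of_ae_prod h] with x hx
  by_contra hfx
  exact hc (f x / C) (hx.mono fun y hy => by rw [← hy, div_div_cancel₀ hfx])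

end EigenfunctionQuotient

theorem rho_n_not_eigenvalue_general (k : ℕ)
    (η : Measure (ℤ → Bool))
    (m : Measure (ℕ → Bool)) [IsProbabilityMeasure m]
    (hm : ∀ (s : Finset ℕ) (f : ℕ → Bool),
      m {α | ∀ i ∈ s, α i = f i} = (1 / 2 : ENNReal) ^ s.card)
    (herg : Ergodic (fun p : (ℤ → Bool) × (ℕ → Bool) => (shiftZ p.1, odo p.2))
      (∑ i ∈ Finset.range (2 ^ k),
        (Measure.map (shiftZ^[i]) η).prod (m.restrict (cylA i k))))
    (n : ℕ) (hn : k < n) :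
    ¬ ∃ f : (ℤ → Bool) → ℂ,
      MemLp f 2 ((2 ^ k : ENNReal)⁻¹ • ∑ j ∈ Finset.range (2 ^ k),
        Measure.map (shiftZ^[j]) η) ∧
      ¬ (f =ᵐ[(2 ^ k : ENNReal)⁻¹ • ∑ j ∈ Finset.range (2 ^ k),
        Measure.map (shiftZ^[j]) η] 0) ∧
      (∀ᵐ w ∂((2 ^ k : ENNReal)⁻¹ • ∑ j ∈ Finset.range (2 ^ k),
          Measure.map (shiftZ^[j]) η),
        f (shiftZ w) = Complex.exp (2 * Real.pi * Complex.I / (2 ^ n)) * f w) := by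
  rintro ⟨f, hf, hf0, heig⟩
  have hfair : IsFairCoinMeasure m := hm
  set D := ∑ i ∈ Finset.range (2 ^ k), (Measure.map (shiftZ^[i]) η).prod (m.restrict (cylA i k))
  set ζ := Complex.exp (2 * Real.pi * Complex.I / (2 ^ n))
  have hζ : IsPrimitiveRoot ζ (2 ^ n) := by
    simpa using Complex.isPrimitiveRoot_exp (2 ^ n) (by positivity)
  have hf_mk := hf.1.ae_eq_mk
  simp only [Filter.EventuallyEq, ae_finsetSum_measure_iff,
    Measure.ae_ennreal_smul_measure_iff (by simp : (2 ^ k : ENNReal)⁻¹ ≠ 0)] at hf0 hf_mk heig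
  have hfD : ∀ᵐ p ∂D, f (shiftZ p.1) = ζ * f p.1 :=
    ae_finsetSum_measure_iff.2 fun i hi => Measure.quasiMeasurePreserving_fst.ae (heig i hi)
  have hcD : ∀ᵐ p ∂D, ζ ^ bitValue (odo p.2) n = ζ * ζ ^ bitValue p.2 n :=
    ae_finsetSum_measure_iff.2 fun i _ => Measure.quasiMeasurePreserving_snd.ae <|
      ae_restrict_of_ae <| hfair.ae_exists_eq_false.mono fun _ => pow_bitValue_odo hζ.pow_eq_one
  have hgm : AEStronglyMeasurable (fun p => f p.1 / ζ ^ bitValue p.2 n) D := by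
    refine ((hf.1.stronglyMeasurable_mk.measurable.comp measurable_fst).div
      ((Measurable.of_discrete (f := (ζ ^ ·))).comp
        ((measurable_bitValue n).comp measurable_snd))).aestronglyMeasurable.congr ?_
    filter_upwards [ae_finsetSum_measure_iff.2 fun i hi =>
      Measure.quasiMeasurePreserving_fst.ae (hf_mk i hi)] with p hp
    simp [hp]
  obtain ⟨C, hC⟩ := herg.exists_ae_div_eq_const (f := f) (c := fun α => ζ ^ bitValue α n)
    (Complex.exp_ne_zero _) hgm hfD hcD
  exact hf0 fun i hi => ae_eq_zero_of_ae_div_eq_const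
    (hfair.not_ae_restrict_cylA_pow_bitValue_eq hζ hn (Finset.mem_range.1 hi))
    (ae_finsetSum_measure_iff.1 hC i hi)

/-- Let η be 𝕊^(2^k)-invariant on {0,1}^ℤ and suppose
D_k[η] = ∑_{i<2^k} (𝕊^i η) × (χ_{A_{i,k}} m) is ergodic for 𝕊 × 𝕆. Then for n > k,
ρ_n = exp(2πi/2^n) is not an eigenvalue of 𝕊 on ({0,1}^ℤ, θ₀), where
θ₀ = 2^{−k} ∑_{j<2^k} 𝕊^j η. -/
theorem rho_n_not_eigenvalue (k : ℕ)
    (η : Measure (ℤ → Bool)) [IsProbabilityMeasure η]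
    (hη : Measure.map (shiftZ^[2 ^ k]) η = η)
    (m : Measure (ℕ → Bool)) [IsProbabilityMeasure m]
    (hm : ∀ (s : Finset ℕ) (f : ℕ → Bool),
      m {α | ∀ i ∈ s, α i = f i} = (1 / 2 : ENNReal) ^ s.card)
    (herg : Ergodic (fun p : (ℤ → Bool) × (ℕ → Bool) => (shiftZ p.1, odo p.2))
      (∑ i ∈ Finset.range (2 ^ k),
        (Measure.map (shiftZ^[i]) η).prod (m.restrict (cylA i k))))
    (n : ℕ) (hn : k < n) :
    ¬ ∃ f : (ℤ → Bool) → ℂ,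
      MemLp f 2 ((2 ^ k : ENNReal)⁻¹ • ∑ j ∈ Finset.range (2 ^ k),
        Measure.map (shiftZ^[j]) η) ∧
      ¬ (f =ᵐ[(2 ^ k : ENNReal)⁻¹ • ∑ j ∈ Finset.range (2 ^ k),
        Measure.map (shiftZ^[j]) η] 0) ∧
      (∀ᵐ w ∂((2 ^ k : ENNReal)⁻¹ • ∑ j ∈ Finset.range (2 ^ k),
          Measure.map (shiftZ^[j]) η),
        f (shiftZ w) = Complex.exp (2 * Real.pi * Complex.I / (2 ^ n)) * f w) :=
  rho_n_not_eigenvalue_general k η m hm herg n hn
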